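/- arXiv:1505.02995 — 4 statements merged into one kernel-verified Lean document; each statement's English description precedes it below -/
import Mathlib

section
/- Let f, g, h ∈ L¹_loc(ℝ₊). Then for almost every (t,s) ∈ (0,∞)², (g⁺ *₂ (f⊗h))(t,s) = (h * (f*g)_t)(s) − (f_t * (h*g))(s); explicitly, ∫₀^t ∫₀^s g(t+s−r₁−r₂) f(r₁) h(r₂) dr₂ dr₁ = ∫₀^s h(s−r)·(f*g)(t+r) dr − ∫₀^s f(t+s−r)·(h*g)(r) dr. -/
/-!
Write `c = t + s` and `Θ(r₁, r₂) = g(c - r₁ - r₂) f(r₁) h(r₂)`, with `g` extended by zero to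
negative arguments. Substituting `r ↦ s - r` and `r ↦ c - r`, each of the three integrals becomes
the integral of `Θ` over `r₂ ∈ (0, s]` and `r₁` in an interval: `(0, t]` on the left,
`(0, c]` in the first term on the right and `(t, c]` in the second. The identity is then
additivity in `r₁`. Fubini applies whenever `Θ` is integrable on `(0, c]²`, and this holds for
almost every `c`: after truncating `f`, `g`, `h` to `[-M, M]`, the function `(r, c) ↦ Θ` is a shear
of `g ⊗ f ⊗ h`, hence integrable on `ℝ³`.
-/

open MeasureTheory Filter Set Topology

noncomputable section

/-- Convolution on `ℝ₊`: `(f*g)(t) = ∫₀^t f(t−s)g(s) ds`. -/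
def conv (f g : ℝ → ℝ) (t : ℝ) : ℝ := ∫ s in (0:ℝ)..t, f (t - s) * g s

namespace MeasureTheory

theorem LocallyIntegrableOn.locallyIntegrable_indicator {X E : Type*} [TopologicalSpace X]
    [MeasurableSpace X] [OpensMeasurableSpace X] [NormedAddCommGroup E] {μ : Measure X}
    {f : X → E} {s : Set X} (hf : LocallyIntegrableOn f s μ) (hs : IsClosed s) :
    LocallyIntegrable (s.indicator f) μ := by
  intro x
  obtain ⟨U, hU, hfU⟩ := (locallyIntegrableOn_iff_locallyIntegrable_restrict hs).mp hf x
  refine ⟨U, hU, ?_⟩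
  rw [IntegrableOn, integrable_indicator_iff hs.measurableSet, IntegrableOn,
    Measure.restrict_comm hs.measurableSet]
  exact hfU

theorem Integrable.ae_integrable_comp_sub_sub_mul {G 𝕜 : Type*} [AddGroup G] [MeasurableSpace G]
    [MeasurableAdd G] [MeasurableSub₂ G] [NormedRing 𝕜] {μ : Measure G} [SFinite μ]
    [μ.IsAddRightInvariant] {f g h : G → 𝕜}
    (hf : Integrable f μ) (hg : Integrable g μ) (hh : Integrable h μ) :
    ∀ᵐ c ∂μ, Integrable (fun r : G × G => g (c - r.1 - r.2) * (f r.1 * h r.2)) (μ.prod μ) := by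
  have hprod : Integrable (fun z : (G × G) × G => g z.2 * (f z.1.1 * h z.1.2))
      ((μ.prod μ).prod μ) :=
    (hg.mul_prod (hf.mul_prod hh)).swap
  have hshear : MeasurePreserving (fun z : (G × G) × G => (z.1, z.2 - z.1.1 - z.1.2))
      ((μ.prod μ).prod μ) ((μ.prod μ).prod μ) :=
    (MeasurePreserving.id _).skew_product (g := fun (r : G × G) c => c - r.1 - r.2)
      (by fun_prop) <| ae_of_all _ fun r =>
      ((measurePreserving_sub_right μ r.2).comp (measurePreserving_sub_right μ r.1)).map_eq
  exact (hshear.integrable_comp_of_integrable hprod).prod_left_ae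

theorem LocallyIntegrable.ae_integrableOn_Icc_prod_comp_sub_sub_mul {f g h : ℝ → ℝ}
    (hf : LocallyIntegrable f) (hg : LocallyIntegrable g) (hh : LocallyIntegrable h) :
    ∀ᵐ c, IntegrableOn (fun r : ℝ × ℝ => g (c - r.1 - r.2) * (f r.1 * h r.2))
      (Icc 0 c ×ˢ Icc 0 c) := by
  have htrunc : ∀ M : ℕ, ∀ᵐ c : ℝ, c ≤ M →
      IntegrableOn (fun r : ℝ × ℝ => g (c - r.1 - r.2) * (f r.1 * h r.2))
        (Icc 0 c ×ˢ Icc 0 c) := by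
    intro M
    set K := Icc (-(M : ℝ)) M
    have hK : ∀ φ : ℝ → ℝ, LocallyIntegrable φ → Integrable (K.indicator φ) := fun φ hφ =>
      (hφ.integrableOn_isCompact isCompact_Icc).integrable_indicator measurableSet_Icc
    filter_upwards [(hK f hf).ae_integrable_comp_sub_sub_mul (hK g hg) (hK h hh)] with c hc hcM
    refine hc.integrableOn.congr_fun (fun r ⟨⟨hr₁, hr₁c⟩, ⟨hr₂, hr₂c⟩⟩ => ?_)
      (measurableSet_Icc.prod measurableSet_Icc)
    have hM : (0 : ℝ) ≤ M := M.cast_nonneg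
    dsimp only
    rw [indicator_of_mem (show r.1 ∈ K from ⟨by linarith, by linarith⟩),
      indicator_of_mem (show r.2 ∈ K from ⟨by linarith, by linarith⟩),
      indicator_of_mem (show c - r.1 - r.2 ∈ K from ⟨by linarith, by linarith⟩)]
  filter_upwards [ae_all_iff.mpr htrunc] with c hc
  exact hc ⌈c⌉₊ (Nat.le_ceil c)

end MeasureTheory

theorem conv_congr {φ φ' ψ ψ' : ℝ → ℝ} (hφ : EqOn φ φ' (Ici 0)) (hψ : EqOn ψ ψ' (Ici 0))
    {x : ℝ} (hx : 0 ≤ x) : conv φ ψ x = conv φ' ψ' x := by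
  refine intervalIntegral.integral_congr fun u hu => ?_
  rw [uIcc_of_le hx] at hu
  simp only [hφ (sub_nonneg.mpr hu.2), hψ hu.1]

theorem conv_eq_intervalIntegral_of_le (φ : ℝ → ℝ) {ψ : ℝ → ℝ} (hψ : ∀ x < 0, ψ x = 0)
    {x y : ℝ} (hx : 0 ≤ x) (hxy : x ≤ y) :
    conv φ ψ x = ∫ u in (0:ℝ)..y, φ u * ψ (x - u) := by
  have hsub := intervalIntegral.integral_comp_sub_left (fun u => φ u * ψ (x - u)) x
    (a := 0) (b := x)
  simp only [sub_sub_cancel, sub_self, sub_zero] at hsub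
  rw [conv, hsub, intervalIntegral.integral_of_le hx,
    intervalIntegral.integral_of_le (hx.trans hxy)]
  refine (setIntegral_eq_of_subset_of_forall_sdiff_eq_zero measurableSet_Ioc
    (Ioc_subset_Ioc_right hxy) fun u hu => ?_).symm
  have hxu : x < u := lt_of_not_ge fun h => hu.2 ⟨hu.1.1, h⟩
  rw [hψ _ (sub_neg.mpr hxu), mul_zero]

theorem doubleConv_tensor_eq_sub_of_integrableOn {f g h : ℝ → ℝ} (hg : ∀ x < 0, g x = 0)
    {t s : ℝ} (ht : 0 ≤ t) (hs : 0 ≤ s)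
    (hint : IntegrableOn (fun r : ℝ × ℝ => g (t + s - r.1 - r.2) * (f r.1 * h r.2))
      (Ioc 0 (t + s) ×ˢ Ioc 0 s)) :
    (∫ r₁ in (0:ℝ)..t, ∫ r₂ in (0:ℝ)..s, g (t + s - r₁ - r₂) * (f r₁ * h r₂))
      = (∫ r in (0:ℝ)..s, h (s - r) * conv f g (t + r))
        - (∫ r in (0:ℝ)..s, f (t + s - r) * conv h g r) := by
  set φ : ℝ → ℝ := fun r₁ => ∫ r₂ in (0:ℝ)..s, g (t + s - r₁ - r₂) * (f r₁ * h r₂)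
  have hts : 0 ≤ t + s := add_nonneg ht hs
  have hint' : Integrable (Function.uncurry fun r₁ r₂ => g (t + s - r₁ - r₂) * (f r₁ * h r₂))
      ((volume.restrict (Ioc 0 (t + s))).prod (volume.restrict (Ioc 0 s))) := by
    rw [Measure.prod_restrict]
    exact hint
  have hφ : IntervalIntegrable φ volume 0 (t + s) := by
    rw [intervalIntegrable_iff_integrableOn_Ioc_of_le hts]
    simp only [φ, intervalIntegral.integral_of_le hs]
    exact hint'.integral_prod_left
  have hA : (∫ r in (0:ℝ)..s, h (s - r) * conv f g (t + r)) = ∫ r₁ in (0:ℝ)..t + s, φ r₁ :=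
    calc (∫ r in (0:ℝ)..s, h (s - r) * conv f g (t + r))
        = ∫ r₂ in (0:ℝ)..s, h r₂ * conv f g (t + s - r₂) := by
          simpa [show ∀ r, t + s - (s - r) = t + r from fun r => by ring] using
            intervalIntegral.integral_comp_sub_left
              (fun r₂ => h r₂ * conv f g (t + s - r₂)) s (a := 0) (b := s)
      _ = ∫ r₂ in (0:ℝ)..s, ∫ r₁ in (0:ℝ)..t + s, g (t + s - r₁ - r₂) * (f r₁ * h r₂) := by
          refine intervalIntegral.integral_congr fun r₂ hr₂ => ?_
          rw [uIcc_of_le hs] at hr₂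
          rw [conv_eq_intervalIntegral_of_le f hg (x := t + s - r₂) (y := t + s)
            (by linarith [hr₂.2]) (by linarith [hr₂.1]), ← intervalIntegral.integral_const_mul]
          refine intervalIntegral.integral_congr fun r₁ _ => ?_
          rw [sub_right_comm]
          ring
      _ = ∫ r₁ in (0:ℝ)..t + s, φ r₁ := by
          simp only [φ, intervalIntegral.integral_of_le hs, intervalIntegral.integral_of_le hts]
          exact (integral_integral_swap hint').symm
  have hB : (∫ r in (0:ℝ)..s, f (t + s - r) * conv h g r) = ∫ r₁ in t..t + s, φ r₁ :=
    calc (∫ r in (0:ℝ)..s, f (t + s - r) * conv h g r)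
        = ∫ r₁ in t..t + s, f r₁ * conv h g (t + s - r₁) := by
          simpa using intervalIntegral.integral_comp_sub_left
            (fun r₁ => f r₁ * conv h g (t + s - r₁)) (t + s) (a := 0) (b := s)
      _ = ∫ r₁ in t..t + s, φ r₁ := by
          refine intervalIntegral.integral_congr fun r₁ hr₁ => ?_
          rw [uIcc_of_le (by linarith)] at hr₁
          rw [conv_eq_intervalIntegral_of_le h hg (x := t + s - r₁) (y := s)
            (by linarith [hr₁.2]) (by linarith [hr₁.1]), ← intervalIntegral.integral_const_mul]
          refine intervalIntegral.integral_congr fun r₂ _ => ?_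
          ring
  have htmem : t ∈ uIcc 0 (t + s) := by
    rw [uIcc_of_le hts]
    exact ⟨ht, le_add_of_nonneg_right hs⟩
  rw [hA, hB, ← intervalIntegral.integral_add_adjacent_intervals
    (hφ.mono_set (uIcc_subset_uIcc_left htmem)) (hφ.mono_set (uIcc_subset_uIcc_right htmem))]
  ring

theorem ae_doubleConv_tensor_eq_sub {f g h : ℝ → ℝ} (hf : LocallyIntegrable f)
    (hg : LocallyIntegrable g) (hh : LocallyIntegrable h) (hg0 : ∀ x < 0, g x = 0) :
    ∀ᵐ p : ℝ × ℝ, 0 ≤ p.1 → 0 ≤ p.2 →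
      (∫ r₁ in (0:ℝ)..p.1, ∫ r₂ in (0:ℝ)..p.2, g (p.1 + p.2 - r₁ - r₂) * (f r₁ * h r₂))
        = (∫ r in (0:ℝ)..p.2, h (p.2 - r) * conv f g (p.1 + r))
          - (∫ r in (0:ℝ)..p.2, f (p.1 + p.2 - r) * conv h g r) := by
  filter_upwards [(quasiMeasurePreserving_add volume volume).ae
    (hf.ae_integrableOn_Icc_prod_comp_sub_sub_mul hg hh)] with p hp ht hs
  exact doubleConv_tensor_eq_sub_of_integrableOn hg0 ht hs (hp.mono_set (prod_mono
    Ioc_subset_Icc_self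
    (Ioc_subset_Icc_self.trans (Icc_subset_Icc_right (le_add_of_nonneg_left ht)))))

/-- For `f,g,h ∈ L¹_loc(ℝ₊)` and a.e. `(t,s) ∈ (0,∞)²`,
`(g⁺ *₂ (f⊗h))(t,s) = (h * (f*g)_t)(s) − (f_t * (h*g))(s)`. -/
theorem gplus_doubleconv_tensor
    (f g h : ℝ → ℝ)
    (hf : LocallyIntegrableOn f (Set.Ici (0:ℝ)))
    (hg : LocallyIntegrableOn g (Set.Ici (0:ℝ)))
    (hh : LocallyIntegrableOn h (Set.Ici (0:ℝ))) :
    ∀ᵐ p : ℝ × ℝ, 0 < p.1 → 0 < p.2 →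
      (∫ r₁ in (0:ℝ)..p.1, ∫ r₂ in (0:ℝ)..p.2,
          g (p.1 + p.2 - r₁ - r₂) * (f r₁ * h r₂))
        = (∫ r in (0:ℝ)..p.2, h (p.2 - r) * conv f g (p.1 + r))
          - (∫ r in (0:ℝ)..p.2, f (p.1 + p.2 - r) * conv h g r) := by
  have key := ae_doubleConv_tensor_eq_sub (hf.locallyIntegrable_indicator isClosed_Ici)
    (hg.locallyIntegrable_indicator isClosed_Ici) (hh.locallyIntegrable_indicator isClosed_Ici)
    fun x hx => indicator_of_notMem (notMem_Ici.mpr hx) _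
  set F := (Ici (0:ℝ)).indicator f
  set G := (Ici (0:ℝ)).indicator g
  set H := (Ici (0:ℝ)).indicator h
  have hF : EqOn f F (Ici 0) := eqOn_indicator.symm
  have hG : EqOn g G (Ici 0) := eqOn_indicator.symm
  have hH : EqOn h H (Ici 0) := eqOn_indicator.symm
  filter_upwards [key] with p hp ht hs
  convert hp ht.le hs.le using 1
  · refine intervalIntegral.integral_congr fun r₁ hr₁ => ?_
    refine intervalIntegral.integral_congr fun r₂ hr₂ => ?_
    rw [uIcc_of_le ht.le] at hr₁
    rw [uIcc_of_le hs.le] at hr₂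
    rw [hF hr₁.1, hH hr₂.1, hG (show (0:ℝ) ≤ p.1 + p.2 - r₁ - r₂ by linarith [hr₁.2, hr₂.2])]
  congr 1
  · refine intervalIntegral.integral_congr fun r hr => ?_
    rw [uIcc_of_le hs.le] at hr
    rw [hH (show (0:ℝ) ≤ p.2 - r by linarith [hr.2]),
      conv_congr hF hG (show (0:ℝ) ≤ p.1 + r by linarith [hr.1])]
  · refine intervalIntegral.integral_congr fun r hr => ?_
    rw [uIcc_of_le hs.le] at hr
    rw [hF (show (0:ℝ) ≤ p.1 + p.2 - r by linarith [hr.2]), conv_congr hH hG hr.1]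
end
end

section
/- Let f, g, h ∈ L¹_loc(ℝ₊) and let τ ≥ 0. Then for almost every t ≥ τ, ∫₀^{t−τ} h(t−s)(g*f)(s) ds + ∫₀^τ f(t−s)(g*h)(s) ds = (f*g*h)(t) − ∫₀^{t−τ} ∫₀^τ g(t−r₁−r₂) f(r₁) h(r₂) dr₂ dr₁, i.e. the left-hand side equals (f*g*h)(t) − (g⁺ *₂ (f⊗h))(t−τ, τ). -/
/-!
Every term of the identity is an integral of `P t (r₁, r₂) = g (t - r₁ - r₂) * (f r₁ * h r₂)`
over a piece of the triangle `T t = {r₁, r₂ ≥ 0, r₁ + r₂ ≤ t}`, sliced by Fubini in one order or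
the other: the triple convolution over all of `T t`, the two left-hand terms over
`{r₂ ≥ τ}` and `{r₁ ≥ t - τ}`, and the double convolution over the rectangle
`[0, t - τ) × [0, τ)`. These three pieces cover `T t` and overlap only on the null line
`r₁ + r₂ = t`. That `P t` is integrable on `T t` for almost every `t` follows from Fubini on
`ℝ² × ℝ`, where the shear `(r, t) ↦ (r, t - r₁ - r₂)` turns `P` into `f ⊗ h ⊗ g`.
-/

open MeasureTheory Filter Set Topology

noncomputable section

def cornerTriangle (a b t : ℝ) : Set (ℝ × ℝ) := {p | a ≤ p.1 ∧ b ≤ p.2 ∧ p.1 + p.2 ≤ t}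

lemma measurableSet_cornerTriangle (a b t : ℝ) : MeasurableSet (cornerTriangle a b t) :=
  (measurableSet_le measurable_const measurable_fst).inter
    ((measurableSet_le measurable_const measurable_snd).inter
      (measurableSet_le (measurable_fst.add measurable_snd) measurable_const))

lemma cornerTriangle_subset_cornerTriangle {a b a' b' t : ℝ} (ha : a' ≤ a) (hb : b' ≤ b) :
    cornerTriangle a b t ⊆ cornerTriangle a' b' t :=
  fun _ ⟨h₁, h₂, h₃⟩ => ⟨ha.trans h₁, hb.trans h₂, h₃⟩

lemma preimage_swap_cornerTriangle (a b t : ℝ) :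
    Prod.swap ⁻¹' cornerTriangle a b t = cornerTriangle b a t := by
  ext p
  simp only [cornerTriangle, mem_preimage, mem_ofPred_eq, Prod.fst_swap, Prod.snd_swap,
    add_comm p.2]
  tauto

lemma Ico_prod_Ico_subset_cornerTriangle {a b c d t : ℝ} (hcd : c + d ≤ t) :
    Ico a c ×ˢ Ico b d ⊆ cornerTriangle a b t :=
  fun _ ⟨⟨h₁, h₂⟩, h₃, h₄⟩ => ⟨h₁, h₃, by linarith⟩

lemma preimage_prodMk_cornerTriangle {a b t x : ℝ} (hx : x ∈ Icc a (t - b)) :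
    Prod.mk x ⁻¹' cornerTriangle a b t = Icc b (t - x) := by
  ext y
  simp only [cornerTriangle, mem_preimage, mem_ofPred_eq, mem_Icc, le_sub_iff_add_le', hx.1,
    true_and]

lemma preimage_prodMk_cornerTriangle_of_notMem {a b t x : ℝ} (hx : x ∉ Icc a (t - b)) :
    Prod.mk x ⁻¹' cornerTriangle a b t = ∅ := by
  refine eq_empty_of_forall_notMem fun y ⟨h₁, h₂, h₃⟩ => hx ⟨h₁, ?_⟩
  simp only at h₂ h₃
  linarith

section Fubini

variable {E : Type*} [NormedAddCommGroup E] [NormedSpace ℝ E]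

theorem setIntegral_prod_eq_integral_setIntegral_preimage {α β : Type*} [MeasurableSpace α]
    [MeasurableSpace β] {μ : Measure α} {ν : Measure β} [SFinite μ] [SFinite ν]
    {s : Set (α × β)} (hs : MeasurableSet s) {F : α × β → E}
    (hF : IntegrableOn F s (μ.prod ν)) :
    ∫ p in s, F p ∂μ.prod ν = ∫ x, ∫ y in Prod.mk x ⁻¹' s, F (x, y) ∂ν ∂μ := by
  rw [← integral_indicator hs, integral_prod _ ((integrable_indicator_iff hs).2 hF)]
  congr 1 with x
  rw [← integral_indicator (measurable_prodMk_left hs)]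
  rfl

theorem setIntegral_cornerTriangle_eq_integral_integral {a b t : ℝ} (hab : a + b ≤ t)
    {F : ℝ × ℝ → E} (hF : IntegrableOn F (cornerTriangle a b t)) :
    ∫ p in cornerTriangle a b t, F p = ∫ x in a..(t - b), ∫ y in b..(t - x), F (x, y) := by
  have hfiber (x : ℝ) : ∫ y in Prod.mk x ⁻¹' cornerTriangle a b t, F (x, y)
      = (Icc a (t - b)).indicator (fun x => ∫ y in b..(t - x), F (x, y)) x := by
    by_cases hx : x ∈ Icc a (t - b)
    · rw [preimage_prodMk_cornerTriangle hx, indicator_of_mem hx, integral_Icc_eq_integral_Ioc,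
        intervalIntegral.integral_of_le (by linarith [hx.2])]
    · rw [preimage_prodMk_cornerTriangle_of_notMem hx, indicator_of_notMem hx,
        Measure.restrict_empty, integral_zero_measure]
  rw [Measure.volume_eq_prod] at hF ⊢
  rw [setIntegral_prod_eq_integral_setIntegral_preimage (measurableSet_cornerTriangle a b t) hF]
  simp_rw [hfiber]
  rw [integral_indicator measurableSet_Icc, integral_Icc_eq_integral_Ioc,
    intervalIntegral.integral_of_le (by linarith)]

theorem setIntegral_cornerTriangle_eq_integral_integral_swap {a b t : ℝ} (hab : a + b ≤ t)
    {F : ℝ × ℝ → E} (hF : IntegrableOn F (cornerTriangle a b t)) :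
    ∫ p in cornerTriangle a b t, F p = ∫ y in b..(t - a), ∫ x in a..(t - y), F (x, y) := by
  have hswap : MeasurePreserving (Prod.swap : ℝ × ℝ → ℝ × ℝ) := Measure.measurePreserving_swap
  have hemb : MeasurableEmbedding (Prod.swap : ℝ × ℝ → ℝ × ℝ) :=
    MeasurableEquiv.prodComm.measurableEmbedding
  rw [← hswap.setIntegral_preimage_emb hemb, preimage_swap_cornerTriangle]
  refine setIntegral_cornerTriangle_eq_integral_integral (by linarith) ?_
  rw [← preimage_swap_cornerTriangle]
  exact (hswap.integrableOn_comp_preimage hemb).2 hF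

theorem setIntegral_Ico_prod_Ico {a b c d : ℝ} (hab : a ≤ b) (hcd : c ≤ d) {F : ℝ × ℝ → E}
    (hF : IntegrableOn F (Ico a b ×ˢ Ico c d)) :
    ∫ p in Ico a b ×ˢ Ico c d, F p = ∫ x in a..b, ∫ y in c..d, F (x, y) := by
  rw [Measure.volume_eq_prod] at hF ⊢
  simp_rw [setIntegral_prod _ hF, integral_Ico_eq_integral_Ioc,
    intervalIntegral.integral_of_le hab, intervalIntegral.integral_of_le hcd]

lemma volume_setOf_fst_add_snd_eq (t : ℝ) : volume {p : ℝ × ℝ | p.1 + p.2 = t} = 0 := by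
  have hm : MeasurableSet {p : ℝ × ℝ | p.1 + p.2 = t} :=
    measurableSet_eq_fun (measurable_fst.add measurable_snd) measurable_const
  rw [Measure.volume_eq_prod, Measure.measure_prod_null hm]
  refine Eventually.of_forall fun x => ?_
  have : Prod.mk x ⁻¹' {p : ℝ × ℝ | p.1 + p.2 = t} = {t - x} := by
    ext y
    simp [eq_sub_iff_add_eq']
  simp [this]

theorem setIntegral_cornerTriangle_split {a b c d t : ℝ} (hac : a ≤ c) (hbd : b ≤ d)
    (hcd : c + d = t) {F : ℝ × ℝ → E} (hF : IntegrableOn F (cornerTriangle a b t)) :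
    ∫ p in cornerTriangle a b t, F p = (∫ p in cornerTriangle a d t, F p)
      + (∫ p in cornerTriangle c b t, F p) + ∫ p in Ico a c ×ˢ Ico b d, F p := by
  have hR := Ico_prod_Ico_subset_cornerTriangle (a := a) (b := b) hcd.le
  have hA := cornerTriangle_subset_cornerTriangle (t := t) (le_refl a) hbd
  have hB := cornerTriangle_subset_cornerTriangle (t := t) hac (le_refl b)
  have hcover : cornerTriangle a b t
      = cornerTriangle a d t ∪ cornerTriangle c b t ∪ Ico a c ×ˢ Ico b d := by
    refine (union_subset (union_subset hA hB) hR).antisymm' fun p ⟨h₁, h₂, h₃⟩ => ?_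
    by_cases hd : d ≤ p.2
    · exact Or.inl (Or.inl ⟨h₁, hd, h₃⟩)
    by_cases hc : c ≤ p.1
    · exact Or.inl (Or.inr ⟨hc, h₂, h₃⟩)
    exact Or.inr ⟨⟨h₁, not_le.1 hc⟩, h₂, not_le.1 hd⟩
  have hAB : AEDisjoint volume (cornerTriangle a d t) (cornerTriangle c b t) :=
    measure_mono_null (fun p ⟨⟨_, h₂, h₃⟩, h₄, _, _⟩ => show p.1 + p.2 = t by linarith)
      (volume_setOf_fst_add_snd_eq t)
  have hABR : Disjoint (cornerTriangle a d t ∪ cornerTriangle c b t) (Ico a c ×ˢ Ico b d) := by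
    refine disjoint_left.2 fun p hp ⟨⟨_, h₁⟩, _, h₂⟩ => ?_
    rcases hp with ⟨_, h, _⟩ | ⟨h, _, _⟩ <;> linarith
  conv_lhs => rw [hcover]
  rw [setIntegral_union hABR (measurableSet_Ico.prod measurableSet_Ico)
      ((hF.mono_set hA).union (hF.mono_set hB)) (hF.mono_set hR),
    setIntegral_union₀ hAB (measurableSet_cornerTriangle c b t).nullMeasurableSet
      (hF.mono_set hA) (hF.mono_set hB)]

end Fubini

theorem ae_integrable_triple_conv_integrand {f g h : ℝ → ℝ} (hf : Integrable f)
    (hg : Integrable g) (hh : Integrable h) :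
    ∀ᵐ t : ℝ, Integrable fun p : ℝ × ℝ => g (t - p.1 - p.2) * (f p.1 * h p.2) := by
  have hshear : MeasurePreserving (fun q : (ℝ × ℝ) × ℝ => (q.1, q.2 - (q.1.1 + q.1.2))) :=
    (MeasurePreserving.id volume).skew_product (g := fun (p : ℝ × ℝ) (v : ℝ) => v - (p.1 + p.2))
      (by fun_prop)
      (Eventually.of_forall fun p => (measurePreserving_sub_right volume (p.1 + p.2)).map_eq)
  have hprod : Integrable fun q : (ℝ × ℝ) × ℝ => g q.2 * (f q.1.1 * h q.1.2) :=
    hg.mul_prod (hf.mul_prod hh) |>.swap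
  filter_upwards [(hshear.integrable_comp_of_integrable hprod).prod_left_ae] with t ht
  simpa only [Function.comp_apply, sub_sub] using ht

theorem ae_integrableOn_cornerTriangle {f g h : ℝ → ℝ} (hf : LocallyIntegrableOn f (Ici 0))
    (hg : LocallyIntegrableOn g (Ici 0)) (hh : LocallyIntegrableOn h (Ici 0)) :
    ∀ᵐ t : ℝ, IntegrableOn (fun p : ℝ × ℝ => g (t - p.1 - p.2) * (f p.1 * h p.2))
      (cornerTriangle 0 0 t) := by
  have htrunc {u : ℝ → ℝ} (hu : LocallyIntegrableOn u (Ici 0)) (N : ℝ) :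
      Integrable ((Icc 0 N).indicator u) :=
    (integrable_indicator_iff measurableSet_Icc).2
      (hu.integrableOn_compact_subset Icc_subset_Ici_self isCompact_Icc)
  have hN (N : ℕ) : ∀ᵐ t : ℝ, t ≤ N → IntegrableOn
      (fun p : ℝ × ℝ => g (t - p.1 - p.2) * (f p.1 * h p.2)) (cornerTriangle 0 0 t) := by
    filter_upwards [ae_integrable_triple_conv_integrand (htrunc hf N) (htrunc hg N)
      (htrunc hh N)] with t ht htN
    refine ht.integrableOn.congr_fun (fun p ⟨h₁, h₂, h₃⟩ => ?_)
      (measurableSet_cornerTriangle 0 0 t)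
    have hIcc {x : ℝ} (h₀ : 0 ≤ x) (hx : x ≤ t) : x ∈ Icc (0 : ℝ) N := ⟨h₀, hx.trans htN⟩
    dsimp only
    rw [indicator_of_mem (hIcc (by linarith) (by linarith)),
      indicator_of_mem (hIcc h₁ (by linarith)), indicator_of_mem (hIcc h₂ (by linarith))]
  filter_upwards [ae_all_iff.2 hN] with t ht
  exact ht _ (Nat.le_ceil t)

lemma conv_comm (f g : ℝ → ℝ) (t : ℝ) : conv f g t = conv g f t := by
  simpa [conv, mul_comm] using
    intervalIntegral.integral_comp_sub_left (fun s => f s * g (t - s)) t (a := 0) (b := t)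

section TriangleIntegrals

variable {f g h : ℝ → ℝ} {τ t : ℝ}

theorem integral_mul_conv_eq_setIntegral_cornerTriangle_snd (hτt : τ ≤ t)
    (hP : IntegrableOn (fun p : ℝ × ℝ => g (t - p.1 - p.2) * (f p.1 * h p.2))
      (cornerTriangle 0 τ t)) :
    ∫ s in 0..(t - τ), h (t - s) * conv g f s
      = ∫ p in cornerTriangle 0 τ t, g (t - p.1 - p.2) * (f p.1 * h p.2) := by
  rw [setIntegral_cornerTriangle_eq_integral_integral_swap (by linarith) hP, sub_zero]
  have hsubst : ∫ s in 0..(t - τ), h (t - s) * conv g f s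
      = ∫ y in τ..t, h y * conv g f (t - y) := by
    simpa using intervalIntegral.integral_comp_sub_left (fun y => h y * conv g f (t - y)) t
      (a := 0) (b := t - τ)
  rw [hsubst]
  refine intervalIntegral.integral_congr fun y _ => ?_
  simp only [conv, ← intervalIntegral.integral_const_mul]
  refine intervalIntegral.integral_congr fun x _ => ?_
  simp only [sub_right_comm t y x]
  ring

theorem integral_mul_conv_eq_setIntegral_cornerTriangle_fst (hτ : 0 ≤ τ)
    (hP : IntegrableOn (fun p : ℝ × ℝ => g (t - p.1 - p.2) * (f p.1 * h p.2))
      (cornerTriangle (t - τ) 0 t)) :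
    ∫ s in 0..τ, f (t - s) * conv g h s
      = ∫ p in cornerTriangle (t - τ) 0 t, g (t - p.1 - p.2) * (f p.1 * h p.2) := by
  rw [setIntegral_cornerTriangle_eq_integral_integral (by linarith) hP, sub_zero]
  have hsubst : ∫ s in 0..τ, f (t - s) * conv g h s
      = ∫ x in (t - τ)..t, f x * conv g h (t - x) := by
    simpa using intervalIntegral.integral_comp_sub_left (fun x => f x * conv g h (t - x)) t
      (a := 0) (b := τ)
  rw [hsubst]
  refine intervalIntegral.integral_congr fun x _ => ?_
  simp only [conv, ← intervalIntegral.integral_const_mul]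
  refine intervalIntegral.integral_congr fun y _ => ?_
  ring

theorem conv_conv_eq_setIntegral_cornerTriangle (ht : 0 ≤ t)
    (hP : IntegrableOn (fun p : ℝ × ℝ => g (t - p.1 - p.2) * (f p.1 * h p.2))
      (cornerTriangle 0 0 t)) :
    conv (conv f g) h t = ∫ p in cornerTriangle 0 0 t, g (t - p.1 - p.2) * (f p.1 * h p.2) := by
  rw [← integral_mul_conv_eq_setIntegral_cornerTriangle_snd ht hP, sub_zero,
    conv_comm (conv f g)]
  exact intervalIntegral.integral_congr fun s _ => by rw [conv_comm f g]

end TriangleIntegrals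

/-- For `f,g,h ∈ L¹_loc(ℝ₊)`, `τ ≥ 0` and a.e. `t ≥ τ`:
`∫₀^{t−τ} h(t−s)(g*f)(s) ds + ∫₀^τ f(t−s)(g*h)(s) ds
  = (f*g*h)(t) − (g⁺ *₂ (f⊗h))(t−τ,τ)`. -/
theorem conv_split_identity
    (f g h : ℝ → ℝ) (τ : ℝ) (hτ : 0 ≤ τ)
    (hf : LocallyIntegrableOn f (Set.Ici (0:ℝ)))
    (hg : LocallyIntegrableOn g (Set.Ici (0:ℝ)))
    (hh : LocallyIntegrableOn h (Set.Ici (0:ℝ))) :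
    ∀ᵐ t : ℝ, τ ≤ t →
      (∫ s in (0:ℝ)..(t - τ), h (t - s) * conv g f s)
        + (∫ s in (0:ℝ)..τ, f (t - s) * conv g h s)
      = conv (conv f g) h t
        - ∫ r₁ in (0:ℝ)..(t - τ), ∫ r₂ in (0:ℝ)..τ,
            g (t - r₁ - r₂) * (f r₁ * h r₂) := by
  filter_upwards [ae_integrableOn_cornerTriangle hf hg hh] with t hP hτt
  have hPon {a b : ℝ} (ha : 0 ≤ a) (hb : 0 ≤ b) :=
    hP.mono_set (cornerTriangle_subset_cornerTriangle (t := t) ha hb)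
  rw [integral_mul_conv_eq_setIntegral_cornerTriangle_snd hτt (hPon le_rfl hτ),
    integral_mul_conv_eq_setIntegral_cornerTriangle_fst hτ (hPon (by linarith) le_rfl),
    conv_conv_eq_setIntegral_cornerTriangle (hτ.trans hτt) hP,
    setIntegral_cornerTriangle_split (sub_nonneg.2 hτt) hτ (sub_add_cancel t τ) hP,
    setIntegral_Ico_prod_Ico (sub_nonneg.2 hτt) hτ
      (hP.mono_set (Ico_prod_Ico_subset_cornerTriangle (sub_add_cancel t τ).le))]
  ring
end
end

section
/- Let X be a complex Banach space and c ∈ L¹_loc(ℝ₊, X) be Laplace transformable (abscissa ω_c), absolutely continuous on (0,∞) and differentiable almost everywhere, with derivative c'. If (c')⁺(t,s) := c'(t+s) is 2-Laplace transformable, then for all λ, μ with Re λ > ω_c, Re μ > ω_c, λ ≠ μ (lying in the region of convergence of L₂((c')⁺)), L₂((c')⁺)(λ,μ) = (λ ĉ(λ) − μ ĉ(μ))/(μ − λ). -/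
open MeasureTheory Filter Set Topology Complex

noncomputable section

/-!
Write `L_z(T) = ∫₀ᵀ e^{-zt} c(t) dt`. Integrating by parts in `s`, the inner integral of
`e^{-λt-μs} c'(t+s)` is `e^{-λt} (e^{-μT} c(t+T) - c(t))` plus `μ` times the same integral with `c`
in place of `c'`; integrating over `t`, the first part is `e^{(λ-μ)T} (L_λ(2T) - L_λ(T)) - L_λ(T)`.
For the double integral of `c(t+s)` over `[0,T]²`, the substitution `u = t + s` in the inner
integral and a second integration by parts give the exact identity
`(λ-μ) ∬ = L_μ(T) - L_λ(T) + e^{(λ-μ)T} (L_λ(2T) - L_λ(T)) - e^{(μ-λ)T} (L_μ(2T) - L_μ(T))`.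
The tails `e^{(p-q)T} (L_p(2T) - L_p(T))` tend to `0`: for real `a` with
`ω < a < min (Re p) (Re q)`, integrating `e^{-(p-a)u}` by parts against the eventually bounded `L_a`
bounds them by `O((1 + T) e^{-(Re q - a) T})`. Hence `L₂(c⁺)(λ,μ) = (ĉ(μ) - ĉ(λ)) / (λ - μ)`, and
`L₂((c')⁺)(λ,μ) = -ĉ(λ) + μ (ĉ(μ) - ĉ(λ)) / (λ - μ)`, which is the claim.

Since `c` is only absolutely continuous, integration by parts is done against a primitive, by
Fubini on a triangle.
-/

theorem MeasureTheory.LocallyIntegrableOn.intervalIntegrable {E : Type*} [NormedAddCommGroup E]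
    {f : ℝ → E} {s : Set ℝ} (hf : LocallyIntegrableOn f s) {a b : ℝ} (hab : uIcc a b ⊆ s) :
    IntervalIntegrable f volume a b :=
  (hf.integrableOn_compact_subset hab isCompact_uIcc).intervalIntegrable

section

variable {X : Type*} [NormedAddCommGroup X] [NormedSpace ℂ X]

theorem setIntegral_Ioc_integral_Ioc_smul_comm [CompleteSpace X] {a b : ℝ} {φ : ℝ → ℂ} {g : ℝ → X}
    (hφ : IntegrableOn φ (Ioc a b)) (hg : IntegrableOn g (Ioc a b)) :
    ∫ r in Ioc a b, (∫ u in Ioc r b, φ u) • g r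
      = ∫ u in Ioc a b, φ u • ∫ r in Ioc a u, g r := by
  set F : ℝ → ℝ → X := fun r u => {p : ℝ × ℝ | p.1 < p.2}.indicator (fun p => φ p.2 • g p.1) (r, u)
  have hF : Integrable (Function.uncurry F) ((volume.restrict (Ioc a b)).prod
      (volume.restrict (Ioc a b))) :=
    ((hφ.smul_prod hg).swap).indicator (measurableSet_lt measurable_fst measurable_snd)
  have hleft : ∀ r ∈ Ioc a b, ∫ u in Ioc a b, F r u = (∫ u in Ioc r b, φ u) • g r := by
    intro r hr
    have hset : Ioi r ∩ Ioc a b = Ioc r b := by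
      ext u; simp only [mem_inter_iff, mem_Ioi, mem_Ioc]
      exact ⟨fun h => ⟨h.1, h.2.2⟩, fun h => ⟨h.1, hr.1.trans h.1, h.2⟩⟩
    have : (F r) = (Ioi r).indicator (fun u => φ u • g r) := by
      ext u; by_cases h : r < u <;> simp [F, h]
    rw [this, integral_indicator measurableSet_Ioi, Measure.restrict_restrict measurableSet_Ioi,
      hset, integral_smul_const]
  have hright : ∀ u ∈ Ioc a b, ∫ r in Ioc a b, F r u = φ u • ∫ r in Ioc a u, g r := by
    intro u hu
    have hset : Iio u ∩ Ioc a b = Ioo a u := by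
      ext r; simp only [mem_inter_iff, mem_Iio, mem_Ioc, mem_Ioo]
      exact ⟨fun h => ⟨h.2.1, h.1⟩, fun h => ⟨h.2, h.1, h.2.le.trans hu.2⟩⟩
    have : (fun r => F r u) = (Iio u).indicator (fun r => φ u • g r) := by
      ext r; by_cases h : r < u <;> simp [F, h]
    rw [this, integral_indicator measurableSet_Iio, Measure.restrict_restrict measurableSet_Iio,
      hset, integral_smul, integral_Ioc_eq_integral_Ioo]
  calc ∫ r in Ioc a b, (∫ u in Ioc r b, φ u) • g r
      = ∫ r in Ioc a b, ∫ u in Ioc a b, F r u :=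
        (setIntegral_congr_fun measurableSet_Ioc hleft).symm
    _ = ∫ u in Ioc a b, ∫ r in Ioc a b, F r u := integral_integral_swap hF
    _ = ∫ u in Ioc a b, φ u • ∫ r in Ioc a u, g r := setIntegral_congr_fun measurableSet_Ioc hright

theorem continuousOn_of_eq_add_integral {a b : ℝ} {g G : ℝ → X}
    (hg : IntervalIntegrable g volume a b) (hG : ∀ r ∈ Icc a b, G r = G a + ∫ u in a..r, g u) :
    ContinuousOn G (Icc a b) := by
  rcases le_total a b with hab | hba
  · have hprim : ContinuousOn (fun r => ∫ u in a..r, g u) (Icc a b) := by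
      have h := intervalIntegral.continuousOn_primitive_interval (μ := volume) (a := a) (b := b)
        (by rw [uIcc_of_le hab]; exact (intervalIntegrable_iff_integrableOn_Icc_of_le hab).1 hg)
      rwa [uIcc_of_le hab] at h
    exact (continuousOn_const.add hprim).congr hG
  · exact (subsingleton_Icc_of_ge hba).continuousOn G

/-- Unlike `intervalIntegral.integral_smul_deriv_eq_deriv_smul`, `G` need not be differentiable
anywhere. -/
theorem integral_smul_eq_sub_integral_deriv_smul_of_primitive [CompleteSpace X] {a b : ℝ}
    (hab : a ≤ b) {φ φ' : ℝ → ℂ} (hφ : ∀ x, HasDerivAt φ (φ' x) x) (hφ' : Continuous φ')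
    {g G : ℝ → X} (hg : IntervalIntegrable g volume a b)
    (hG : ∀ r ∈ Icc a b, G r = G a + ∫ u in a..r, g u) :
    ∫ r in a..b, φ r • g r = φ b • G b - φ a • G a - ∫ u in a..b, φ' u • G u := by
  have hφc : Continuous φ := continuous_iff_continuousAt.2 fun x => (hφ x).continuousAt
  have hFTC : ∀ r, ∫ u in r..b, φ' u = φ b - φ r := fun r =>
    intervalIntegral.integral_eq_sub_of_hasDerivAt (fun u _ => hφ u) (hφ'.intervalIntegrable r b)
  have hGc : ContinuousOn G (uIcc a b) := by
    rw [uIcc_of_le hab]; exact continuousOn_of_eq_add_integral hg hG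
  have hφ'G : IntervalIntegrable (fun u => φ' u • G u) volume a b :=
    (hφ'.continuousOn.smul hGc).intervalIntegrable
  have hgo : IntegrableOn g (Ioc a b) := (intervalIntegrable_iff_integrableOn_Ioc_of_le hab).1 hg
  have hswap : ∫ r in a..b, (φ b - φ r) • g r = ∫ u in a..b, φ' u • (G u - G a) := by
    simp only [intervalIntegral.integral_of_le hab, ← hFTC]
    calc ∫ r in Ioc a b, (∫ u in r..b, φ' u) • g r
        = ∫ r in Ioc a b, (∫ u in Ioc r b, φ' u) • g r :=
          setIntegral_congr_fun measurableSet_Ioc fun r hr => by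
            rw [intervalIntegral.integral_of_le hr.2]
      _ = ∫ u in Ioc a b, φ' u • ∫ r in Ioc a u, g r :=
          setIntegral_Ioc_integral_Ioc_smul_comm hφ'.integrableOn_Ioc hgo
      _ = ∫ u in Ioc a b, φ' u • (G u - G a) :=
          setIntegral_congr_fun measurableSet_Ioc fun u hu => by
            rw [hG u (Ioc_subset_Icc_self hu), add_sub_cancel_left,
              intervalIntegral.integral_of_le hu.1.le]
  calc ∫ r in a..b, φ r • g r
      = ∫ r in a..b, (φ b • g r - (φ b - φ r) • g r) :=
        intervalIntegral.integral_congr fun r _ => by rw [sub_smul, sub_sub_cancel]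
    _ = φ b • (G b - G a) - ∫ u in a..b, φ' u • (G u - G a) := by
        have h₁ : IntervalIntegrable (fun r => φ b • g r) volume a b := hg.smul (φ b)
        have h₂ : IntervalIntegrable (fun r => (φ b - φ r) • g r) volume a b :=
          hg.continuousOn_smul (continuousOn_const.sub hφc.continuousOn)
        rw [intervalIntegral.integral_sub h₁ h₂,
          intervalIntegral.integral_smul, hswap, hG b (right_mem_Icc.2 hab), add_sub_cancel_left]
    _ = φ b • G b - φ a • G a - ∫ u in a..b, φ' u • G u := by
        have h₃ : IntervalIntegrable (fun u => φ' u • G a) volume a b :=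
          (hφ'.intervalIntegrable a b).smul_continuousOn continuousOn_const
        simp only [smul_sub]
        rw [intervalIntegral.integral_sub hφ'G h₃, intervalIntegral.integral_smul_const, hFTC,
          sub_smul]
        abel

theorem hasDerivAt_cexp_neg_mul (z : ℂ) (x : ℝ) :
    HasDerivAt (fun t : ℝ => cexp (-(z * t))) (-z * cexp (-(z * x))) x := by
  have h : HasDerivAt (fun t : ℝ => -(z * t)) (-z) x := by
    simpa using ((hasDerivAt_id x).ofReal_comp.const_mul z).fun_neg
  simpa [mul_comm] using h.cexp

theorem continuous_cexp_neg_mul (z : ℂ) : Continuous fun t : ℝ => cexp (-(z * t)) := by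
  fun_prop

theorem integral_cexp_smul_eq_of_primitive [CompleteSpace X] {a b : ℝ} (hab : a ≤ b) (z : ℂ)
    {g G : ℝ → X} (hg : IntervalIntegrable g volume a b)
    (hG : ∀ r ∈ Icc a b, G r = G a + ∫ u in a..r, g u) :
    ∫ r in a..b, cexp (-(z * r)) • g r
      = cexp (-(z * b)) • G b - cexp (-(z * a)) • G a
        + z • ∫ u in a..b, cexp (-(z * u)) • G u := by
  rw [integral_smul_eq_sub_integral_deriv_smul_of_primitive hab (hasDerivAt_cexp_neg_mul z)
    (continuous_const.mul (continuous_cexp_neg_mul z)) hg hG]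
  simp only [mul_smul, neg_smul, intervalIntegral.integral_neg, intervalIntegral.integral_smul,
    sub_neg_eq_add]

theorem MeasureTheory.LocallyIntegrableOn.intervalIntegrable_cexp_smul {f : ℝ → X} {s : Set ℝ}
    (hf : LocallyIntegrableOn f s) {a b : ℝ} (hab : uIcc a b ⊆ s) (z : ℂ) :
    IntervalIntegrable (fun t : ℝ => cexp (-(z * t)) • f t) volume a b :=
  (hf.intervalIntegrable hab).continuousOn_smul (continuous_cexp_neg_mul z).continuousOn

def laplaceTrunc (f : ℝ → X) (z : ℂ) (T : ℝ) : X :=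
  ∫ t in (0 : ℝ)..T, cexp (-(z * t)) • f t

def doubleLaplaceTrunc (F : ℝ → ℝ → X) (lam mu : ℂ) (T : ℝ) : X :=
  ∫ t in (0 : ℝ)..T, ∫ s in (0 : ℝ)..T, cexp (-(lam * t) - mu * s) • F t s

def HasLaplaceTransform (f : ℝ → X) (ω : ℝ) (C : ℂ → X) : Prop :=
  ∀ z : ℂ, ω < z.re → Tendsto (laplaceTrunc f z) atTop (𝓝 (C z))

variable {f : ℝ → X}

@[simp]
theorem laplaceTrunc_zero (z : ℂ) : laplaceTrunc f z 0 = 0 :=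
  intervalIntegral.integral_same

theorem laplaceTrunc_sub (hf : LocallyIntegrableOn f (Ici 0)) (z : ℂ) {a b : ℝ} (ha : 0 ≤ a)
    (hb : 0 ≤ b) :
    laplaceTrunc f z b - laplaceTrunc f z a = ∫ t in a..b, cexp (-(z * t)) • f t :=
  intervalIntegral.integral_interval_sub_left
    (hf.intervalIntegrable_cexp_smul (ordConnected_Ici.uIcc_subset le_rfl hb) z)
    (hf.intervalIntegrable_cexp_smul (ordConnected_Ici.uIcc_subset le_rfl ha) z)

theorem continuousOn_laplaceTrunc (hf : LocallyIntegrableOn f (Ici 0)) (z : ℂ) {T : ℝ}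
    (hT : 0 ≤ T) :
    ContinuousOn (laplaceTrunc f z) (Icc 0 T) :=
  continuousOn_of_eq_add_integral
    (hf.intervalIntegrable_cexp_smul (ordConnected_Ici.uIcc_subset le_rfl hT) z)
    (fun r _ => by rw [laplaceTrunc_zero, zero_add]; rfl)

theorem smul_integral_cexp_smul_laplaceTrunc [CompleteSpace X]
    (hf : LocallyIntegrableOn f (Ici 0)) (ν μ : ℂ) {a b : ℝ} (ha : 0 ≤ a) (hab : a ≤ b) :
    ν • ∫ u in a..b, cexp (-(ν * u)) • laplaceTrunc f μ u
      = cexp (-(ν * a)) • laplaceTrunc f μ a - cexp (-(ν * b)) • laplaceTrunc f μ b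
        + (laplaceTrunc f (ν + μ) b - laplaceTrunc f (ν + μ) a) := by
  have hb := ha.trans hab
  have hibp := integral_cexp_smul_eq_of_primitive (G := laplaceTrunc f μ) hab ν
    (hf.intervalIntegrable_cexp_smul (ordConnected_Ici.uIcc_subset ha hb) μ)
    (fun r hr => by rw [← laplaceTrunc_sub hf μ ha (ha.trans hr.1), add_sub_cancel])
  have hexp : ∫ r in a..b, cexp (-(ν * r)) • cexp (-(μ * r)) • f r
      = laplaceTrunc f (ν + μ) b - laplaceTrunc f (ν + μ) a := by
    rw [laplaceTrunc_sub hf _ ha hb]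
    refine intervalIntegral.integral_congr fun r _ => ?_
    simp only [smul_smul, ← Complex.exp_add, add_mul, neg_add]
  rw [← hexp, hibp]
  abel

theorem integral_cexp_smul_comp_add_left (h : ℝ → X) (z : ℂ) (x T : ℝ) :
    ∫ t in (0 : ℝ)..T, cexp (-(z * t)) • h (x + t)
      = cexp (z * x) • ∫ u in x..x + T, cexp (-(z * u)) • h u := by
  have hshift := intervalIntegral.integral_comp_add_left
    (fun u => cexp (z * x) • cexp (-(z * u)) • h u) x (a := 0) (b := T)
  rw [add_zero] at hshift
  rw [← intervalIntegral.integral_smul, ← hshift]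
  refine intervalIntegral.integral_congr fun t _ => ?_
  simp only [smul_smul, ← Complex.exp_add, ofReal_add]
  ring_nf

theorem integral_cexp_sub_smul (h : ℝ → X) (lam mu : ℂ) (t T : ℝ) :
    ∫ s in (0 : ℝ)..T, cexp (-(lam * t) - mu * s) • h s
      = cexp (-(lam * t)) • ∫ s in (0 : ℝ)..T, cexp (-(mu * s)) • h s := by
  rw [← intervalIntegral.integral_smul]
  refine intervalIntegral.integral_congr fun s _ => ?_
  simp only [smul_smul, ← Complex.exp_add, sub_eq_add_neg]

theorem integral_cexp_sub_smul_comp_add [CompleteSpace X] (hf : LocallyIntegrableOn f (Ici 0))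
    (lam mu : ℂ) {t T : ℝ} (ht : 0 ≤ t) (hT : 0 ≤ T) :
    ∫ s in (0 : ℝ)..T, cexp (-(lam * t) - mu * s) • f (t + s)
      = cexp (-((lam - mu) * t)) • (laplaceTrunc f mu (t + T) - laplaceTrunc f mu t) := by
  rw [integral_cexp_sub_smul, integral_cexp_smul_comp_add_left, smul_smul, ← Complex.exp_add,
    laplaceTrunc_sub hf mu ht (add_nonneg ht hT)]
  ring_nf

theorem intervalIntegrable_cexp_smul_laplaceTrunc_comp_add (hf : LocallyIntegrableOn f (Ici 0))
    (ν μ : ℂ) {x T : ℝ} (hx : 0 ≤ x) (hT : 0 ≤ T) :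
    IntervalIntegrable (fun t : ℝ => cexp (-(ν * t)) • laplaceTrunc f μ (x + t)) volume 0 T := by
  refine ContinuousOn.intervalIntegrable ?_
  rw [uIcc_of_le hT]
  refine (continuous_cexp_neg_mul ν).continuousOn.smul
    ((continuousOn_laplaceTrunc hf μ (add_nonneg hx hT)).comp (by fun_prop) ?_)
  exact fun t ht => ⟨add_nonneg hx ht.1, add_le_add_right ht.2 x⟩

theorem sub_smul_doubleLaplaceTrunc_comp_add [CompleteSpace X]
    (hf : LocallyIntegrableOn f (Ici 0)) (lam mu : ℂ) {T : ℝ} (hT : 0 ≤ T) :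
    (lam - mu) • doubleLaplaceTrunc (fun t s => f (t + s)) lam mu T
      = laplaceTrunc f mu T - laplaceTrunc f lam T
        + cexp ((lam - mu) * T) • (laplaceTrunc f lam (2 * T) - laplaceTrunc f lam T)
        - cexp ((mu - lam) * T) • (laplaceTrunc f mu (2 * T) - laplaceTrunc f mu T) := by
  set ν := lam - mu with hν
  have hint₁ := intervalIntegrable_cexp_smul_laplaceTrunc_comp_add hf ν mu hT hT
  have hint₀ := intervalIntegrable_cexp_smul_laplaceTrunc_comp_add hf ν mu le_rfl hT
  simp only [zero_add] at hint₀
  have hsplit : doubleLaplaceTrunc (fun t s => f (t + s)) lam mu T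
      = cexp (ν * T) • (∫ u in T..2 * T, cexp (-(ν * u)) • laplaceTrunc f mu u)
        - ∫ u in (0 : ℝ)..T, cexp (-(ν * u)) • laplaceTrunc f mu u := by
    rw [two_mul, ← integral_cexp_smul_comp_add_left, ← intervalIntegral.integral_sub hint₁ hint₀]
    refine intervalIntegral.integral_congr fun t ht => ?_
    rw [uIcc_of_le hT] at ht
    simp only
    rw [integral_cexp_sub_smul_comp_add hf lam mu ht.1 hT, smul_sub, add_comm t T]
  have e₁ : cexp (ν * T) * cexp (-(ν * T)) = 1 := by
    rw [← Complex.exp_add, add_neg_cancel, exp_zero]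
  have e₂ : cexp (ν * T) * cexp (-(ν * ↑(2 * T))) = cexp ((mu - lam) * T) := by
    rw [← Complex.exp_add, hν]; push_cast; ring_nf
  have e₃ : cexp (-(ν * T)) = cexp ((mu - lam) * T) := by rw [hν]; ring_nf
  rw [hsplit, smul_sub, smul_comm ν (cexp _),
    smul_integral_cexp_smul_laplaceTrunc hf ν mu hT (by linarith),
    smul_integral_cexp_smul_laplaceTrunc hf ν mu le_rfl hT, sub_add_cancel]
  simp only [laplaceTrunc_zero, smul_zero, smul_add, smul_sub, smul_smul, e₁, e₂, one_smul]
  rw [e₃]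
  abel

theorem norm_cexp_neg_mul_le {ν : ℂ} (hν : 0 ≤ ν.re) {S u : ℝ} (hSu : S ≤ u) :
    ‖cexp (-(ν * u))‖ ≤ Real.exp (-(ν.re * S)) := by
  rw [norm_exp]
  simpa using Real.exp_le_exp.2 (mul_le_mul_of_nonneg_left hSu hν)

theorem norm_laplaceTrunc_sub_le [CompleteSpace X] (hf : LocallyIntegrableOn f (Ici 0))
    {a p : ℂ} (hap : a.re ≤ p.re) {S T M : ℝ} (hS : 0 ≤ S) (hST : S ≤ T)
    (hM : ∀ u ∈ Icc S T, ‖laplaceTrunc f a u‖ ≤ M) :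
    ‖laplaceTrunc f p T - laplaceTrunc f p S‖
      ≤ M * (2 + ‖p - a‖ * (T - S)) * Real.exp (-((p.re - a.re) * S)) := by
  have hν : 0 ≤ (p - a).re := by rw [sub_re]; linarith
  have key := smul_integral_cexp_smul_laplaceTrunc hf (p - a) a hS hST
  rw [sub_add_cancel] at key
  set E := Real.exp (-((p - a).re * S))
  have hterm : ∀ u ∈ Icc S T, ‖cexp (-((p - a) * u)) • laplaceTrunc f a u‖ ≤ E * M :=
    fun u hu => by
      rw [norm_smul]
      exact mul_le_mul (norm_cexp_neg_mul_le hν hu.1) (hM u hu) (norm_nonneg _) (by positivity)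
  have hint : ‖∫ u in S..T, cexp (-((p - a) * u)) • laplaceTrunc f a u‖ ≤ E * M * (T - S) := by
    have h := intervalIntegral.norm_integral_le_of_norm_le_const fun u hu =>
      hterm u (Ioc_subset_Icc_self (by rwa [uIoc_of_le hST] at hu))
    rwa [abs_of_nonneg (sub_nonneg.2 hST)] at h
  calc ‖laplaceTrunc f p T - laplaceTrunc f p S‖
      = ‖(p - a) • (∫ u in S..T, cexp (-((p - a) * u)) • laplaceTrunc f a u)
          - cexp (-((p - a) * S)) • laplaceTrunc f a S
          + cexp (-((p - a) * T)) • laplaceTrunc f a T‖ := by rw [key]; abel_nf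
    _ ≤ ‖p - a‖ * (E * M * (T - S)) + E * M + E * M := by
        refine (norm_add_le _ _).trans (add_le_add ((norm_sub_le _ _).trans
          (add_le_add ?_ (hterm S (left_mem_Icc.2 hST)))) (hterm T (right_mem_Icc.2 hST)))
        rw [norm_smul]
        exact mul_le_mul_of_nonneg_left hint (norm_nonneg _)
    _ = M * (2 + ‖p - a‖ * (T - S)) * Real.exp (-((p.re - a.re) * S)) := by
        rw [← sub_re]; ring

theorem tendsto_cexp_smul_laplaceTrunc_two_mul_sub [CompleteSpace X]
    (hf : LocallyIntegrableOn f (Ici 0)) {ω : ℝ} {C : ℂ → X} (hC : HasLaplaceTransform f ω C)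
    {p q : ℂ} (hp : ω < p.re) (hq : ω < q.re) :
    Tendsto (fun T : ℝ => cexp ((p - q) * T) • (laplaceTrunc f p (2 * T) - laplaceTrunc f p T))
      atTop (𝓝 0) := by
  obtain ⟨a, hωa, ha⟩ := exists_between (lt_min hp hq)
  obtain ⟨T₀, hT₀⟩ : ∃ T₀, ∀ u ≥ T₀, ‖laplaceTrunc f a u‖ ≤ ‖C a‖ + 1 :=
    eventually_atTop.1 ((hC a (by simpa using hωa)).norm.eventually
      (eventually_le_nhds (lt_add_one _)))
  set M := ‖C a‖ + 1
  set δ := q.re - a with hδdef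
  have hδ : 0 < δ := sub_pos.2 (ha.trans_le (min_le_right _ _))
  have hbound : Tendsto (fun T : ℝ => M * 2 * Real.exp (-δ * T)
      + M * ‖p - a‖ * (T * Real.exp (-δ * T))) atTop (𝓝 0) := by
    have h := ((tendsto_rpow_mul_exp_neg_mul_atTop_nhds_zero 0 δ hδ).const_mul (M * 2)).add
      ((tendsto_rpow_mul_exp_neg_mul_atTop_nhds_zero 1 δ hδ).const_mul (M * ‖p - a‖))
    simpa only [Real.rpow_zero, Real.rpow_one, one_mul, mul_zero, add_zero] using h
  refine squeeze_zero_norm' ?_ hbound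
  filter_upwards [eventually_ge_atTop (max T₀ 0)] with T hT
  have hT0 : 0 ≤ T := le_of_max_le_right hT
  have hap : (a : ℂ).re ≤ p.re := by simpa using (ha.trans_le (min_le_left _ _)).le
  have htail := norm_laplaceTrunc_sub_le hf hap hT0 (by linarith : T ≤ 2 * T)
    fun u hu => hT₀ u ((le_of_max_le_left hT).trans hu.1)
  have hexp : Real.exp ((p.re - q.re) * T) * Real.exp (-((p.re - a) * T))
      = Real.exp (-δ * T) := by
    rw [← Real.exp_add, hδdef]; ring_nf
  rw [norm_smul, norm_exp]
  calc Real.exp ((p - q) * T).re * ‖laplaceTrunc f p (2 * T) - laplaceTrunc f p T‖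
      ≤ Real.exp ((p.re - q.re) * T)
          * (M * (2 + ‖p - a‖ * (2 * T - T)) * Real.exp (-((p.re - a) * T))) := by
        refine mul_le_mul (le_of_eq ?_) (by simpa using htail) (norm_nonneg _) (by positivity)
        simp
    _ = M * 2 * Real.exp (-δ * T) + M * ‖p - a‖ * (T * Real.exp (-δ * T)) := by
        linear_combination (M * (2 + ‖p - a‖ * T)) * hexp

theorem tendsto_doubleLaplaceTrunc_comp_add [CompleteSpace X]
    (hf : LocallyIntegrableOn f (Ici 0)) {ω : ℝ} {C : ℂ → X} (hC : HasLaplaceTransform f ω C)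
    {lam mu : ℂ} (hl : ω < lam.re) (hm : ω < mu.re) (hne : lam ≠ mu) :
    Tendsto (doubleLaplaceTrunc (fun t s => f (t + s)) lam mu) atTop
      (𝓝 ((lam - mu)⁻¹ • (C mu - C lam))) := by
  have hlim := (((hC mu hm).sub (hC lam hl)).add
    (tendsto_cexp_smul_laplaceTrunc_two_mul_sub hf hC hl hm)).sub
    (tendsto_cexp_smul_laplaceTrunc_two_mul_sub hf hC hm hl)
  rw [add_zero, sub_zero] at hlim
  refine (hlim.const_smul (lam - mu)⁻¹).congr' ?_
  filter_upwards [eventually_ge_atTop 0] with T hT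
  rw [← sub_smul_doubleLaplaceTrunc_comp_add hf lam mu hT, inv_smul_smul₀ (sub_ne_zero.2 hne)]

variable [CompleteSpace X] {c c' : ℝ → X}

theorem integral_cexp_sub_smul_deriv_comp_add (hc' : LocallyIntegrableOn c' (Ioi 0))
    (hAC : ∀ s t : ℝ, 0 < s → s ≤ t → c t - c s = ∫ u in s..t, c' u)
    (lam mu : ℂ) {t T : ℝ} (ht : 0 < t) (hT : 0 ≤ T) :
    ∫ s in (0 : ℝ)..T, cexp (-(lam * t) - mu * s) • c' (t + s)
      = cexp (-(lam * t)) • (cexp (-(mu * T)) • c (t + T) - c t)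
        + mu • ∫ s in (0 : ℝ)..T, cexp (-(lam * t) - mu * s) • c (t + s) := by
  have hint : IntervalIntegrable (fun s => c' (t + s)) volume 0 T := by
    simpa using (hc'.intervalIntegrable
      (ordConnected_Ioi.uIcc_subset ht (by linarith : (0 : ℝ) < t + T))).comp_add_left t
  have hprim : ∀ r ∈ Icc 0 T, c (t + r) = c (t + 0) + ∫ u in (0 : ℝ)..r, c' (t + u) :=
    fun r hr => by
      rw [intervalIntegral.integral_comp_add_left, add_zero, ← hAC t (t + r) ht
        (by linarith [hr.1]), add_sub_cancel]
  rw [integral_cexp_sub_smul, integral_cexp_sub_smul,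
    integral_cexp_smul_eq_of_primitive hT mu hint hprim]
  simp only [ofReal_zero, mul_zero, neg_zero, Complex.exp_zero, one_smul, add_zero, smul_add,
    smul_comm _ mu]

theorem doubleLaplaceTrunc_deriv_comp_add (hc : LocallyIntegrableOn c (Ici 0))
    (hc' : LocallyIntegrableOn c' (Ioi 0))
    (hAC : ∀ s t : ℝ, 0 < s → s ≤ t → c t - c s = ∫ u in s..t, c' u)
    (lam mu : ℂ) {T : ℝ} (hT : 0 ≤ T) :
    doubleLaplaceTrunc (fun t s => c' (t + s)) lam mu T
      = cexp ((lam - mu) * T) • (laplaceTrunc c lam (2 * T) - laplaceTrunc c lam T)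
        - laplaceTrunc c lam T + mu • doubleLaplaceTrunc (fun t s => c (t + s)) lam mu T := by
  have hshift : IntervalIntegrable (fun t : ℝ => cexp (-(lam * t)) • c (T + t)) volume 0 T := by
    refine IntervalIntegrable.continuousOn_smul ?_ (continuous_cexp_neg_mul lam).continuousOn
    simpa [two_mul] using (hc.intervalIntegrable
      (ordConnected_Ici.uIcc_subset hT (by linarith : (0 : ℝ) ≤ 2 * T))).comp_add_left T
  have hc0 := hc.intervalIntegrable_cexp_smul (ordConnected_Ici.uIcc_subset le_rfl hT) lam
  have hinner : IntervalIntegrable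
      (fun t => ∫ s in (0 : ℝ)..T, cexp (-(lam * t) - mu * s) • c (t + s)) volume 0 T := by
    refine (intervalIntegrable_congr fun t ht => ?_).1
      ((intervalIntegrable_cexp_smul_laplaceTrunc_comp_add hc (lam - mu) mu hT hT).sub
        (intervalIntegrable_cexp_smul_laplaceTrunc_comp_add hc (lam - mu) mu le_rfl hT))
    rw [uIoc_of_le hT] at ht
    simp only [zero_add]
    rw [integral_cexp_sub_smul_comp_add hc lam mu ht.1.le hT, smul_sub, add_comm t T]
  calc doubleLaplaceTrunc (fun t s => c' (t + s)) lam mu T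
      = ∫ t in (0 : ℝ)..T, (cexp (-(mu * T)) • cexp (-(lam * t)) • c (T + t)
          - cexp (-(lam * t)) • c t
          + mu • ∫ s in (0 : ℝ)..T, cexp (-(lam * t) - mu * s) • c (t + s)) := by
        refine intervalIntegral.integral_congr_ae (Eventually.of_forall fun t ht => ?_)
        rw [uIoc_of_le hT] at ht
        rw [integral_cexp_sub_smul_deriv_comp_add hc' hAC lam mu ht.1 hT, smul_sub,
          smul_comm (cexp _) (cexp _), add_comm t T]
    _ = cexp (-(mu * T)) • (∫ t in (0 : ℝ)..T, cexp (-(lam * t)) • c (T + t))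
          - laplaceTrunc c lam T + mu • doubleLaplaceTrunc (fun t s => c (t + s)) lam mu T := by
        have hshift' : IntervalIntegrable
            (fun t : ℝ => cexp (-(mu * T)) • cexp (-(lam * t)) • c (T + t)) volume 0 T :=
          hshift.smul _
        have hinner' : IntervalIntegrable
            (fun t => mu • ∫ s in (0 : ℝ)..T, cexp (-(lam * t) - mu * s) • c (t + s)) volume 0 T :=
          hinner.smul mu
        rw [intervalIntegral.integral_add (hshift'.sub hc0) hinner',
          intervalIntegral.integral_sub hshift' hc0, intervalIntegral.integral_smul,
          intervalIntegral.integral_smul]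
        rfl
    _ = _ := by
        rw [integral_cexp_smul_comp_add_left, ← two_mul,
          ← laplaceTrunc_sub hc lam hT (by linarith), smul_smul, ← Complex.exp_add]
        ring_nf

end

theorem doubleLaplace_deriv_plus_general
    {X : Type*} [NormedAddCommGroup X] [NormedSpace ℂ X]
    (c c' : ℝ → X)
    (hcloc : LocallyIntegrableOn c (Set.Ici (0:ℝ)))
    (hc'loc : LocallyIntegrableOn c' (Set.Ioi (0:ℝ)))
    -- `c` is absolutely continuous on `(0,∞)` with derivative `c'` (FTC form):
    (hAC : ∀ s t : ℝ, 0 < s → s ≤ t → c t - c s = ∫ u in s..t, c' u)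
    (ω : ℝ) (C : ℂ → X)
    (hc : ∀ lam : ℂ, ω < lam.re →
      Tendsto (fun T : ℝ => ∫ t in (0:ℝ)..T, Complex.exp (-(lam * t)) • c t)
        atTop (nhds (C lam)))
    (ω₁ ω₂ : ℝ) (G : ℂ → ℂ → X)
    (hG : ∀ lam mu : ℂ, ω₁ < lam.re → ω₂ < mu.re →
      Tendsto (fun T : ℝ => ∫ t in (0:ℝ)..T, ∫ s in (0:ℝ)..T,
          Complex.exp (-(lam * t) - mu * s) • c' (t + s))
        atTop (nhds (G lam mu)))
    (lam mu : ℂ) (hl : ω < lam.re) (hm : ω < mu.re)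
    (hl₁ : ω₁ < lam.re) (hm₂ : ω₂ < mu.re) (hne : lam ≠ mu) :
    G lam mu = (mu - lam)⁻¹ • (lam • C lam - mu • C mu) := by
  by_cases hX : CompleteSpace X
  · have hlim := ((tendsto_cexp_smul_laplaceTrunc_two_mul_sub hcloc hc hl hm).sub (hc lam hl)).add
      ((tendsto_doubleLaplaceTrunc_comp_add hcloc hc hl hm hne).const_smul mu)
    have hG' : Tendsto (doubleLaplaceTrunc (fun t s => c' (t + s)) lam mu) atTop
        (𝓝 (G lam mu)) := hG lam mu hl₁ hm₂
    rw [tendsto_nhds_unique hG' (hlim.congr' ?_)]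
    · match_scalars <;> field_simp [sub_ne_zero.2 hne, sub_ne_zero.2 hne.symm] <;> ring
    · filter_upwards [eventually_ge_atTop 0] with T hT
      exact (doubleLaplaceTrunc_deriv_comp_add hcloc hc'loc hAC lam mu hT).symm
  · -- Bochner integrals into a non-complete space are `0` by convention.
    have h0 : ∀ (g : ℝ → X) (a b : ℝ), ∫ x in a..b, g x = 0 := fun g a b => by
      simp [intervalIntegral, integral_of_not_completeSpace hX]
    have hC0 : ∀ z : ℂ, ω < z.re → C z = 0 := fun z hz =>
      tendsto_nhds_unique (hc z hz) (by simpa only [h0] using tendsto_const_nhds)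
    rw [hC0 lam hl, hC0 mu hm, tendsto_nhds_unique (hG lam mu hl₁ hm₂)
      (by simpa only [h0] using tendsto_const_nhds)]
    simp

/-- Let `c ∈ L¹_loc(ℝ₊,X)` be Laplace transformable (abscissa `ω`,
transform `C`), absolutely continuous on `(0,∞)` and a.e. differentiable with
derivative `c'`. If `(c')⁺(t,s) = c'(t+s)` is 2-Laplace transformable (abscissas
`ω₁, ω₂`, transform `G`), then for `Re λ, Re μ > ω` with `λ ≠ μ` in the region of
convergence, `L₂((c')⁺)(λ,μ) = (λ ĉ(λ) − μ ĉ(μ))/(μ − λ)`. -/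
theorem doubleLaplace_deriv_plus
    {X : Type*} [NormedAddCommGroup X] [NormedSpace ℂ X]
    (c c' : ℝ → X)
    (hcloc : LocallyIntegrableOn c (Set.Ici (0:ℝ)))
    (hc'loc : LocallyIntegrableOn c' (Set.Ioi (0:ℝ)))
    -- `c` is absolutely continuous on `(0,∞)` with derivative `c'` (FTC form):
    (hAC : ∀ s t : ℝ, 0 < s → s ≤ t → c t - c s = ∫ u in s..t, c' u)
    -- `c` is differentiable a.e. on `(0,∞)` with derivative `c'`:
    (hdiff : ∀ᵐ t : ℝ, 0 < t → HasDerivAt c (c' t) t)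
    (ω : ℝ) (C : ℂ → X)
    (hc : ∀ lam : ℂ, ω < lam.re →
      Tendsto (fun T : ℝ => ∫ t in (0:ℝ)..T, Complex.exp (-(lam * t)) • c t)
        atTop (nhds (C lam)))
    (ω₁ ω₂ : ℝ) (G : ℂ → ℂ → X)
    (hG : ∀ lam mu : ℂ, ω₁ < lam.re → ω₂ < mu.re →
      Tendsto (fun T : ℝ => ∫ t in (0:ℝ)..T, ∫ s in (0:ℝ)..T,
          Complex.exp (-(lam * t) - mu * s) • c' (t + s))
        atTop (nhds (G lam mu)))
    (lam mu : ℂ) (hl : ω < lam.re) (hm : ω < mu.re)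
    (hl₁ : ω₁ < lam.re) (hm₂ : ω₂ < mu.re) (hne : lam ≠ mu) :
    G lam mu = (mu - lam)⁻¹ • (lam • C lam - mu • C mu) :=
  doubleLaplace_deriv_plus_general c c' hcloc hc'loc hAC ω C hc ω₁ ω₂ G hG lam mu hl hm hl₁ hm₂ hne
end
end

section
/- Let 0 < α < 1. Then for all t, s > 0, (α·sin(απ)/π) · ∫₀^t ∫₀^s r₁^{α−1} r₂^{α−1} (t+s−r₁−r₂)^{−α−1} dr₂ dr₁ = (t+s)^{α−1}. Equivalently, writing g_β(t) = t^{β−1}/Γ(β), one has g_α(t+s) = −∫₀^t ∫₀^s g_{−α}(t+s−r₁−r₂) g_α(r₁) g_α(r₂) dr₂ dr₁. -/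
/-!
Integrating out `r₂` with the antiderivative `r ↦ r^α (a - r)^(-α) / (α a)` of
`r^(α-1) (a - r)^(-α-1)` leaves `s^α/α · ∫₀^t r^(α-1) (t - r)^(-α) / (t + s - r) dr`.
The Möbius substitution `r = t(s+t)w / (s + tw)` maps `(0,1)` onto `(0,t)` and turns this
integral into `(t+s)^(α-1) s^(-α) B(α, 1-α)`, and `B(α, 1-α) = Γ(α)Γ(1-α) = π / sin(πα)`.
The `g_β` form then follows from `Γ(-α)Γ(α) = -π / (α sin(πα))`.
-/

open MeasureTheory Filter Set Topology Real

noncomputable section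

/-- The Riemann–Liouville kernel `g_β(t) = t^{β−1}/Γ(β)`. -/
def gfun (β : ℝ) (t : ℝ) : ℝ := t ^ (β - 1) / Real.Gamma β

theorem Real.integral_rpow_mul_one_sub_rpow {u v : ℝ} (hu : 0 < u) (hv : 0 < v) :
    ∫ x in (0:ℝ)..1, x ^ (u - 1) * (1 - x) ^ (v - 1) = Gamma u * Gamma v / Gamma (u + v) := by
  have h := Complex.betaIntegral_eq_Gamma_mul_div u v (by simpa) (by simpa)
  have hcast : Complex.betaIntegral u v
      = ((∫ x in (0:ℝ)..1, x ^ (u - 1) * (1 - x) ^ (v - 1) : ℝ) : ℂ) := by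
    rw [Complex.betaIntegral, ← intervalIntegral.integral_ofReal]
    refine intervalIntegral.integral_congr fun x hx => ?_
    rw [uIcc_of_le zero_le_one] at hx
    push_cast [Complex.ofReal_cpow hx.1, Complex.ofReal_cpow (sub_nonneg.2 hx.2)]
    rfl
  rw [hcast, ← Complex.ofReal_add, Complex.Gamma_ofReal, Complex.Gamma_ofReal,
    Complex.Gamma_ofReal] at h
  exact_mod_cast h

theorem Real.Gamma_neg_mul_Gamma {α : ℝ} (hα : α ≠ 0) :
    Gamma (-α) * Gamma α = -π / (α * sin (π * α)) := by
  have h := Gamma_mul_Gamma_one_sub α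
  rw [show 1 - α = -α + 1 by ring, Gamma_add_one (neg_ne_zero.2 hα)] at h
  rw [div_mul_eq_div_div_swap, neg_div, ← h]
  field_simp

theorem integral_rpow_mul_one_sub_rpow_neg {α : ℝ} (hα : 0 < α) (hα1 : α < 1) :
    ∫ w in (0:ℝ)..1, w ^ (α - 1) * (1 - w) ^ (-α) = π / sin (π * α) := by
  have h := Real.integral_rpow_mul_one_sub_rpow hα (sub_pos.2 hα1)
  rwa [sub_sub_cancel_left, add_sub_cancel, Gamma_one, div_one, Gamma_mul_Gamma_one_sub] at h

theorem integral_rpow_mul_sub_rpow_neg_sub_one {α a s : ℝ} (hα : 0 < α) (hs : 0 ≤ s)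
    (hsa : s < a) :
    ∫ r in (0:ℝ)..s, r ^ (α - 1) * (a - r) ^ (-α - 1) = s ^ α * (a - s) ^ (-α) / (α * a) := by
  have ha : 0 < a := hs.trans_lt hsa
  have hpos : ∀ x ∈ Icc 0 s, 0 < a - x := fun x hx => by linarith [hx.2]
  have hcont (p : ℝ) : ContinuousOn (fun r : ℝ => (a - r) ^ p) (Icc 0 s) := fun x hx =>
    ((continuous_sub_left a).continuousAt.rpow_const (Or.inl (hpos x hx).ne')).continuousWithinAt
  have hderiv : ∀ x ∈ Ioo 0 s, HasDerivAt (fun r => r ^ α * (a - r) ^ (-α) / (α * a))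
      (x ^ (α - 1) * (a - x) ^ (-α - 1)) x := by
    intro x hx
    have hax := hpos x (Ioo_subset_Icc_self hx)
    refine ((((hasDerivAt_id x).rpow_const (p := α) (Or.inl hx.1.ne')).mul
      (((hasDerivAt_id x).const_sub a).rpow_const (p := -α) (Or.inl hax.ne'))).div_const
        (α * a)).congr_deriv ?_
    have hx0 : x ≠ 0 := hx.1.ne'
    simp only [id, rpow_sub_one hx0, rpow_sub_one hax.ne']
    field_simp
    ring
  rw [intervalIntegral.integral_eq_sub_of_hasDerivAt_of_le hs
    (((continuousOn_id.rpow_const fun _ _ => Or.inr hα.le).mul (hcont _)).div_const _) hderiv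
    ((intervalIntegral.intervalIntegrable_rpow' (by linarith)).mul_continuousOn
      (by rw [uIcc_of_le hs]; exact hcont _))]
  simp [zero_rpow hα.ne']

def mobiusSubst (t s w : ℝ) : ℝ := t * (s + t) * w / (s + t * w)

section MobiusSubst

variable {t s : ℝ}

theorem hasDerivAt_mobiusSubst {w : ℝ} (hw : s + t * w ≠ 0) :
    HasDerivAt (mobiusSubst t s) (t * (s + t) * s / (s + t * w) ^ 2) w := by
  refine (((hasDerivAt_id w).const_mul (t * (s + t))).div
    (((hasDerivAt_id w).const_mul t).const_add s) hw).congr_deriv ?_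
  simp only [id]
  ring

theorem injOn_mobiusSubst (ht : 0 < t) (hs : 0 < s) : InjOn (mobiusSubst t s) (Ici 0) := by
  intro w₁ hw₁ w₂ hw₂ h
  have h₁ : 0 < s + t * w₁ := by nlinarith [mem_Ici.1 hw₁]
  have h₂ : 0 < s + t * w₂ := by nlinarith [mem_Ici.1 hw₂]
  rw [mobiusSubst, mobiusSubst, div_eq_div_iff h₁.ne' h₂.ne'] at h
  have hts : t * (s + t) * s ≠ 0 := by positivity
  exact mul_left_cancel₀ hts (by linear_combination h)

theorem mobiusSubst_image_Ioo (ht : 0 < t) (hs : 0 < s) :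
    mobiusSubst t s '' Ioo 0 1 = Ioo 0 t := by
  refine (image_subset_iff.2 fun w hw => ?_).antisymm ?_
  · have hA : 0 < s + t * w := by nlinarith [hw.1]
    refine ⟨div_pos (mul_pos (by positivity) hw.1) hA, (div_lt_iff₀ hA).2 ?_⟩
    nlinarith [mul_pos (mul_pos ht hs) (sub_pos.2 hw.2)]
  · have hcont : ContinuousOn (mobiusSubst t s) (Icc 0 1) :=
      ContinuousOn.div (by fun_prop) (by fun_prop) fun w hw => by nlinarith [hw.1]
    have h₀ : mobiusSubst t s 0 = 0 := by simp [mobiusSubst]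
    have h₁ : mobiusSubst t s 1 = t := by
      rw [mobiusSubst, mul_one, mul_one, add_comm, mul_div_cancel_right₀ _ (by positivity)]
    simpa [h₀, h₁] using intermediate_value_Ioo zero_le_one hcont

theorem abs_deriv_mul_comp_mobiusSubst (ht : 0 < t) (hs : 0 < s) (α : ℝ) {w : ℝ}
    (hw : w ∈ Ioo 0 1) :
    |t * (s + t) * s / (s + t * w) ^ 2| *
      (mobiusSubst t s w ^ (α - 1) * (t - mobiusSubst t s w) ^ (-α) / (t + s - mobiusSubst t s w))
      = (t + s) ^ (α - 1) * s ^ (-α) * (w ^ (α - 1) * (1 - w) ^ (-α)) := by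
  obtain ⟨hw₀, hw₁⟩ := hw
  have hA : 0 < s + t * w := by nlinarith
  have h1w : 0 < 1 - w := by linarith
  have hsub : t - mobiusSubst t s w = t * s * (1 - w) / (s + t * w) := by
    rw [mobiusSubst]; field_simp; ring
  have hsub' : t + s - mobiusSubst t s w = (s + t) * s / (s + t * w) := by
    rw [mobiusSubst]; field_simp; ring
  rw [hsub, hsub', mobiusSubst, abs_of_pos (by positivity),
    div_rpow (by positivity) hA.le, mul_rpow (by positivity) hw₀.le, mul_rpow ht.le (by positivity),
    div_rpow (by positivity) hA.le, mul_rpow (by positivity) h1w.le, mul_rpow ht.le hs.le,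
    add_comm t s, rpow_sub_one ht.ne', rpow_sub_one hA.ne', rpow_neg ht.le, rpow_neg hA.le]
  have : 0 < t ^ α := rpow_pos_of_pos ht α
  have : 0 < (s + t * w) ^ α := rpow_pos_of_pos hA α
  field_simp

end MobiusSubst

theorem integral_rpow_mul_sub_rpow_neg_div {t s : ℝ} (ht : 0 < t) (hs : 0 < s) (α : ℝ) :
    ∫ r in (0:ℝ)..t, r ^ (α - 1) * (t - r) ^ (-α) / (t + s - r)
      = (t + s) ^ (α - 1) * s ^ (-α) * ∫ w in (0:ℝ)..1, w ^ (α - 1) * (1 - w) ^ (-α) := by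
  have hderiv : ∀ w ∈ Ioo (0:ℝ) 1,
      HasDerivWithinAt (mobiusSubst t s) (t * (s + t) * s / (s + t * w) ^ 2) (Ioo 0 1) w :=
    fun w hw => (hasDerivAt_mobiusSubst (by nlinarith [hw.1])).hasDerivWithinAt
  have hchange := integral_image_eq_integral_abs_deriv_smul measurableSet_Ioo hderiv
    ((injOn_mobiusSubst ht hs).mono (Ioo_subset_Icc_self.trans Icc_subset_Ici_self))
    (fun r => r ^ (α - 1) * (t - r) ^ (-α) / (t + s - r))
  simp only [mobiusSubst_image_Ioo ht hs, smul_eq_mul] at hchange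
  rw [intervalIntegral.integral_of_le ht.le, intervalIntegral.integral_of_le zero_le_one,
    integral_Ioc_eq_integral_Ioo, integral_Ioc_eq_integral_Ioo, hchange, ← integral_const_mul]
  exact setIntegral_congr_fun measurableSet_Ioo fun w hw =>
    abs_deriv_mul_comp_mobiusSubst ht hs α hw

theorem integral_integral_rpow_mul_rpow_mul_rpow {α t s : ℝ} (hα : 0 < α) (ht : 0 < t)
    (hs : 0 < s) :
    (∫ r₁ in (0:ℝ)..t, ∫ r₂ in (0:ℝ)..s,
        r₁ ^ (α - 1) * r₂ ^ (α - 1) * (t + s - r₁ - r₂) ^ (-α - 1))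
      = (t + s) ^ (α - 1) / α * ∫ w in (0:ℝ)..1, w ^ (α - 1) * (1 - w) ^ (-α) := by
  have hinner : ∀ r ∈ Ioo 0 t, (∫ r₂ in (0:ℝ)..s,
      r ^ (α - 1) * r₂ ^ (α - 1) * (t + s - r - r₂) ^ (-α - 1))
        = s ^ α / α * (r ^ (α - 1) * (t - r) ^ (-α) / (t + s - r)) := by
    intro r hr
    have hsr : s < t + s - r := by linarith [hr.2]
    simp_rw [mul_assoc, intervalIntegral.integral_const_mul]
    rw [integral_rpow_mul_sub_rpow_neg_sub_one hα hs.le hsr, show t + s - r - s = t - r by ring]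
    field_simp
  rw [intervalIntegral.integral_of_le ht.le, integral_Ioc_eq_integral_Ioo,
    setIntegral_congr_fun measurableSet_Ioo hinner, integral_const_mul,
    ← integral_Ioc_eq_integral_Ioo, ← intervalIntegral.integral_of_le ht.le,
    integral_rpow_mul_sub_rpow_neg_div ht hs, rpow_neg hs.le]
  have : 0 < s ^ α := rpow_pos_of_pos hs α
  field_simp

/-- For `0 < α < 1` and `t, s > 0`:
`(α·sin(απ)/π) ∫₀^t ∫₀^s r₁^{α−1} r₂^{α−1} (t+s−r₁−r₂)^{−α−1} dr₂ dr₁ = (t+s)^{α−1}`,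
equivalently `g_α(t+s) = −∫₀^t ∫₀^s g_{−α}(t+s−r₁−r₂) g_α(r₁) g_α(r₂) dr₂ dr₁`. -/
theorem galpha_plus_identity (α : ℝ) (hα : 0 < α) (hα1 : α < 1)
    (t s : ℝ) (ht : 0 < t) (hs : 0 < s) :
    (α * Real.sin (α * π) / π) *
        (∫ r₁ in (0:ℝ)..t, ∫ r₂ in (0:ℝ)..s,
          r₁ ^ (α - 1) * r₂ ^ (α - 1) * (t + s - r₁ - r₂) ^ (-α - 1))
      = (t + s) ^ (α - 1)
    ∧
    gfun α (t + s)
      = -∫ r₁ in (0:ℝ)..t, ∫ r₂ in (0:ℝ)..s,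
          gfun (-α) (t + s - r₁ - r₂) * gfun α r₁ * gfun α r₂ := by
  have hI := integral_integral_rpow_mul_rpow_mul_rpow hα ht hs
  rw [integral_rpow_mul_one_sub_rpow_neg hα hα1] at hI
  have hsin : 0 < sin (π * α) := sin_pos_of_pos_of_lt_pi (by positivity) (by nlinarith [pi_pos])
  have hgfun (r₁ r₂ : ℝ) : gfun (-α) (t + s - r₁ - r₂) * gfun α r₁ * gfun α r₂
      = (Gamma (-α) * Gamma α * Gamma α)⁻¹ *
        (r₁ ^ (α - 1) * r₂ ^ (α - 1) * (t + s - r₁ - r₂) ^ (-α - 1)) := by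
    simp only [gfun]
    ring
  simp_rw [hgfun, intervalIntegral.integral_const_mul]
  rw [mul_comm α π, hI, gfun, Gamma_neg_mul_Gamma hα.ne']
  have hsin' : sin (α * π) ≠ 0 := mul_comm π α ▸ hsin.ne'
  have hΓ : Gamma α ≠ 0 := (Gamma_pos_of_pos hα).ne'
  constructor <;> field_simp
end
end
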